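/- arXiv:1003.5681 — 5 statements merged into one kernel-verified Lean document; each statement's English description precedes it below -/
import Mathlib

section
/- Let L/K be a finite field extension and v a valuation on L. Then the index (vL : vK) of the value groups and the degree [Lv : Kv] of the residue field extension are both at most [L : K]. -/
open IsLocalRing

variable {Γ₀ : Type*} [LinearOrderedCommGroupWithZero Γ₀]

/-- The value group `vL` of a valuation on a field `L`, as a subgroup of `Γ₀ˣ`. -/
def Valuation.valueGroup {L : Type*} [Field L] (v : Valuation L Γ₀) : Subgroup Γ₀ˣ where
  carrier := {γ : Γ₀ˣ | ∃ a : L, v a = (γ : Γ₀)}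
  one_mem' := ⟨1, map_one v⟩
  mul_mem' := by
    rintro γ δ ⟨a, ha⟩ ⟨b, hb⟩
    exact ⟨a * b, by rw [map_mul, ha, hb]; norm_cast⟩
  inv_mem' := by
    rintro γ ⟨a, ha⟩
    exact ⟨a⁻¹, by rw [map_inv₀, ha]; norm_cast⟩

/-- The inclusion of the valuation ring of `(K, v|K)` into the valuation ring of
`(L,v)`. -/
def valuationSubringInclusion {K L : Type*} [Field K] [Field L] [Algebra K L]
    (v : Valuation L Γ₀) :
    ↥(v.comap (algebraMap K L)).valuationSubring →+* ↥v.valuationSubring where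
  toFun x := ⟨algebraMap K L x, x.2⟩
  map_one' := by ext; simp
  map_mul' x y := by ext; simp
  map_zero' := by ext; simp
  map_add' x y := by ext; simp

theorem valuationSubringInclusion_isLocalHom {K L : Type*} [Field K] [Field L]
    [Algebra K L] (v : Valuation L Γ₀) :
    IsLocalHom (valuationSubringInclusion (K := K) v) := by
  constructor
  intro a ha
  apply ((Valuation.integer.integers (v.comap (algebraMap K L))).isUnit_iff_valuation_eq_one (x := a)).mpr
  exact ((Valuation.integer.integers v).isUnit_iff_valuation_eq_one).mp ha

/-- The induced embedding `Kv → Lv` of residue fields. -/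
noncomputable def residueFieldMap {K L : Type*} [Field K] [Field L] [Algebra K L]
    (v : Valuation L Γ₀) :
    ResidueField ↥(v.comap (algebraMap K L)).valuationSubring →+*
      ResidueField ↥v.valuationSubring :=
  letI := valuationSubringInclusion_isLocalHom (K := K) v
  ResidueField.map (valuationSubringInclusion (K := K) v)

/-!
If the values of `a₁, …, aₙ ∈ L` lie in pairwise distinct cosets of `vK`, then the nonzero terms
of a relation `∑ cᵢ aᵢ = 0` with `cᵢ ∈ K` have pairwise distinct values, so the sum has the value
of its largest term and cannot vanish: coset representatives are `K`-linearly independent.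
If `x₁, …, xₙ` in the valuation ring of `L` have `Kv`-linearly independent residues, divide a
relation `∑ cᵢ xᵢ = 0` by a coefficient of largest value; all coefficients then lie in the
valuation ring of `K`, one of them is `1`, and reducing gives a nontrivial relation among the
residues.
-/

namespace Valuation

variable {K L : Type*} [Field K] [Field L] [Algebra K L]

theorem linearIndependent_of_pairwise_ne_mul (v : Valuation L Γ₀) {ι : Type*} (a : ι → L)
    (ha : ∀ i, a i ≠ 0)
    (hd : Pairwise fun i j => ∀ c : K, v (a i) ≠ v (algebraMap K L c) * v (a j)) :
    LinearIndependent K a := by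
  classical
  rw [linearIndependent_iff']
  intro s g hsum i₀ hi₀
  by_contra hg₀
  simp only [Algebra.smul_def] at hsum
  obtain ⟨j, hj, hmax⟩ := s.exists_max_image (fun i => v (algebraMap K L (g i) * a i)) ⟨i₀, hi₀⟩
  have hvj : v (algebraMap K L (g j) * a j) ≠ 0 :=
    (pos_iff_ne_zero.2 (by simp [hg₀, ha i₀])).trans_le (hmax i₀ hi₀) |>.ne'
  have hlt : ∀ i ∈ s \ {j}, v (algebraMap K L (g i) * a i) < v (algebraMap K L (g j) * a j) := by
    intro i hi
    rw [Finset.mem_sdiff, Finset.mem_singleton] at hi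
    refine (hmax i hi.1).lt_of_ne fun heq => ?_
    have hgi : g i ≠ 0 := fun h => hvj (by rw [← heq, h, map_zero, zero_mul, map_zero])
    refine hd hi.2 (g j / g i) ?_
    have hvgi : v (algebraMap K L (g i)) ≠ 0 := by simpa using hgi
    rw [map_div₀, v.map_div, div_mul_eq_mul_div, eq_div_iff hvgi, mul_comm, ← map_mul, heq,
      map_mul]
  exact hvj (by rw [← v.map_sum_eq_of_lt hj hlt, hsum, map_zero])

theorem valueGroup_mk_eq_mk_of_eq_mul (v : Valuation L Γ₀) {γ δ : v.valueGroup} {c : K}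
    (h : ((γ : Γ₀ˣ) : Γ₀) = v (algebraMap K L c) * ((δ : Γ₀ˣ) : Γ₀)) :
    (γ : v.valueGroup ⧸ (v.comap (algebraMap K L)).valueGroup.subgroupOf v.valueGroup) = δ := by
  have hc : v (algebraMap K L c) ≠ 0 := left_ne_zero_of_mul (h ▸ γ.1.ne_zero)
  refine QuotientGroup.eq.2 ⟨c⁻¹, ?_⟩
  rw [comap_apply, map_inv₀, v.map_inv]
  simp only [Subgroup.coe_subtype, Subgroup.coe_mul, Subgroup.coe_inv, Units.val_mul,
    Units.val_inv_eq_inv_val]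
  rw [h, mul_inv, mul_assoc, inv_mul_cancel₀ δ.1.ne_zero, mul_one]

theorem linearIndependent_of_linearIndependent_residue (v : Valuation L Γ₀) {ι : Type*}
    [Fintype ι] (x : ι → v.valuationSubring)
    (hx : letI := (residueFieldMap (K := K) v).toAlgebra
      LinearIndependent (ResidueField (v.comap (algebraMap K L)).valuationSubring)
        (residue v.valuationSubring ∘ x)) :
    LinearIndependent K fun i => (x i : L) := by
  let := (residueFieldMap (K := K) v).toAlgebra
  rw [Fintype.linearIndependent_iff]
  intro g hsum i₀
  by_contra hg₀
  obtain ⟨j, -, hmax⟩ :=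
    Finset.univ.exists_max_image (fun i => v (algebraMap K L (g i))) ⟨i₀, Finset.mem_univ _⟩
  have hgj : g j ≠ 0 := fun h => hg₀ (by simpa [h] using hmax i₀ (Finset.mem_univ _))
  let d : ι → (v.comap (algebraMap K L)).valuationSubring := fun i =>
    ⟨g i / g j, by
      rw [mem_valuationSubring_iff, comap_apply, map_div₀, v.map_div]
      exact div_le_one_of_le₀ (hmax i (Finset.mem_univ _)) zero_le⟩
  have hrel : ∑ i, valuationSubringInclusion v (d i) * x i = 0 := by
    ext
    push_cast
    rw [← mul_zero (algebraMap K L (g j))⁻¹, ← hsum, Finset.mul_sum]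
    refine Finset.sum_congr rfl fun i _ => ?_
    change algebraMap K L (g i / g j) * _ = _
    rw [map_div₀, Algebra.smul_def]
    ring
  have hres : ∑ i, residue _ (d i) • residue v.valuationSubring (x i) = 0 := by
    simpa only [map_sum, map_mul, map_zero, Algebra.smul_def, RingHom.algebraMap_toAlgebra,
      residueFieldMap, ResidueField.map_residue] using congrArg (residue _) hrel
  have hdj : d j = 1 := Subtype.ext (div_self hgj)
  simpa [hdj] using Fintype.linearIndependent_iff.1 hx _ hres j

end Valuation

/-- Fundamental inequality consequences: if `L/K` is a finite field extension and `v`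
a valuation on `L`, then the index `(vL : vK)` of the value groups and the degree
`[Lv : Kv]` of the residue field extension are both at most `[L : K]`. -/
theorem index_le_finrank_and_residue_rank_le_finrank {K L : Type*} [Field K] [Field L]
    [Algebra K L] [FiniteDimensional K L] (v : Valuation L Γ₀) :
    Cardinal.mk
        (↥v.valueGroup ⧸ ((v.comap (algebraMap K L)).valueGroup.subgroupOf v.valueGroup))
        ≤ (Module.finrank K L : Cardinal) ∧
    @Module.rank (ResidueField ↥(v.comap (algebraMap K L)).valuationSubring)
        (ResidueField ↥v.valuationSubring) _ _
        (@Algebra.toModule _ _ _ _ (residueFieldMap v).toAlgebra)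
        ≤ (Module.finrank K L : Cardinal) := by
  constructor
  · choose a ha using fun q : v.valueGroup ⧸
        (v.comap (algebraMap K L)).valueGroup.subgroupOf v.valueGroup => q.out.2
    have ha₀ : ∀ q, a q ≠ 0 := fun q => by simp [← v.ne_zero_iff, ha]
    refine (Valuation.linearIndependent_of_pairwise_ne_mul v a ha₀ fun q q' hne c hc => hne ?_)
      |>.cardinalMk_le_finrank
    rw [← q.out_eq', ← q'.out_eq']
    exact Valuation.valueGroup_mk_eq_mk_of_eq_mul v (by rwa [ha, ha] at hc)
  · let := (residueFieldMap (K := K) v).toAlgebra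
    refine rank_le fun s hs => ?_
    let lift := Function.surjInv (residue_surjective (R := v.valuationSubring))
    have hlift := Valuation.linearIndependent_of_linearIndependent_residue (K := K) v
      (lift ∘ (↑) : s → _) (by simpa [Function.comp_def, lift, Function.surjInv_eq] using hs)
    simpa using hlift.fintype_card_le_finrank
end

section
/- Let (L,v) be a valued field, let v = w ∘ w̄ be a decomposition of v as a composition with a non-trivial coarsening w, and let K be a subfield of L. Then K is dense in (L,v) if and only if K is dense in (L,w). -/
/-!
A coarsening is monotone: `v x ≤ v y → w x ≤ w y`, so `v`-approximations are `w`-approximations.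
Conversely, since `w` is non-trivial there is `π ≠ 0` with `w π < 1`; approximating to within
`w (c * π) < w c` gives a strict `w`-inequality, and by monotonicity (contrapositive) a strict
`w`-inequality forces the `v`-inequality `v (a - b) ≤ v c`.
-/

/-- `K` is dense in `(L,u)`: for every `a ∈ L` and every value `u c` (`c ≠ 0`)
in the value group, there is `b ∈ K` with `u (a - b) ≤ u c`. -/
def Valuation.DenseSubfield {L : Type*} [Field L] {Γ₀ : Type*}
    [LinearOrderedCommGroupWithZero Γ₀] (u : Valuation L Γ₀) (K : Subfield L) : Prop :=
  ∀ a c : L, c ≠ 0 → ∃ b ∈ K, u (a - b) ≤ u c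

namespace Valuation

section DivisionRing

variable {R Γ₀ Δ₀ : Type*} [DivisionRing R] [LinearOrderedCommGroupWithZero Γ₀]
  [LinearOrderedCommGroupWithZero Δ₀] {v : Valuation R Γ₀} {w : Valuation R Δ₀}

theorem map_le_map_of_coarsening (hcoarse : ∀ x : R, v x ≤ 1 → w x ≤ 1) {x y : R}
    (h : v x ≤ v y) : w x ≤ w y := by
  rcases eq_or_ne y 0 with rfl | hy
  · rw [map_zero, le_zero_iff, zero_iff] at h
    simp [h]
  · have hdiv := hcoarse (x / y) (by rwa [map_div₀, div_le_one₀ (v.pos_iff.mpr hy)])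
    rwa [map_div₀, div_le_one₀ (w.pos_iff.mpr hy)] at hdiv

theorem map_le_map_of_map_lt_map_of_coarsening (hcoarse : ∀ x : R, v x ≤ 1 → w x ≤ 1)
    {x y : R} (h : w x < w y) : v x ≤ v y :=
  le_of_not_gt fun h' => (map_le_map_of_coarsening hcoarse h'.le).not_gt h

end DivisionRing

variable {L Γ₀ Δ₀ : Type*} [Field L] [LinearOrderedCommGroupWithZero Γ₀]
  [LinearOrderedCommGroupWithZero Δ₀] {v : Valuation L Γ₀} {w : Valuation L Δ₀}

theorem DenseSubfield.exists_map_sub_lt [w.IsNontrivial] {K : Subfield L}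
    (hK : w.DenseSubfield K) (a : L) {c : L} (hc : c ≠ 0) : ∃ b ∈ K, w (a - b) < w c := by
  obtain ⟨π, hπ0, hπ1⟩ := IsNontrivial.exists_lt_one (v := w)
  obtain ⟨b, hbK, hb⟩ := hK a (c * π) (mul_ne_zero hc hπ0)
  refine ⟨b, hbK, ?_⟩
  calc w (a - b) ≤ w c * w π := by rwa [← map_mul]
    _ < w c := mul_lt_of_lt_one_right (w.pos_iff.mpr hc) hπ1

theorem DenseSubfield.of_coarsening (hcoarse : ∀ x : L, v x ≤ 1 → w x ≤ 1) {K : Subfield L}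
    (hK : v.DenseSubfield K) : w.DenseSubfield K := fun a c hc => by
  obtain ⟨b, hbK, hb⟩ := hK a c hc
  exact ⟨b, hbK, map_le_map_of_coarsening hcoarse hb⟩

theorem DenseSubfield.of_nontrivial_coarsening (hcoarse : ∀ x : L, v x ≤ 1 → w x ≤ 1)
    [w.IsNontrivial] {K : Subfield L} (hK : w.DenseSubfield K) : v.DenseSubfield K :=
  fun a c hc => by
    obtain ⟨b, hbK, hb⟩ := hK.exists_map_sub_lt a hc
    exact ⟨b, hbK, map_le_map_of_map_lt_map_of_coarsening hcoarse hb⟩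

end Valuation

/-- If `w` is a non-trivial coarsening of `v` (the valuation ring of `v` is contained
in that of `w`, so that `v = w ∘ w̄`), then a subfield `K` is dense in `(L,v)` iff it
is dense in `(L,w)`. -/
theorem denseSubfield_iff_denseSubfield_coarsening {L : Type*} [Field L]
    {Γ₀ Δ₀ : Type*} [LinearOrderedCommGroupWithZero Γ₀] [LinearOrderedCommGroupWithZero Δ₀]
    (v : Valuation L Γ₀) (w : Valuation L Δ₀)
    (hcoarse : ∀ x : L, v x ≤ 1 → w x ≤ 1)
    (hnontriv : ∃ x : L, x ≠ 0 ∧ w x ≠ 1)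
    (K : Subfield L) :
    v.DenseSubfield K ↔ w.DenseSubfield K := by
  obtain ⟨x, hx0, hx1⟩ := hnontriv
  have : w.IsNontrivial := ⟨x, w.ne_zero_iff.mpr hx0, hx1⟩
  exact ⟨.of_coarsening hcoarse, .of_nontrivial_coarsening hcoarse⟩
end

section
/- Let K be a rational function field K = K₀(T) for a nonempty set T of algebraically independent elements over K₀, and let F be a finite extension of K. Then no non-trivial valuation on F is henselian. -/
/-!
Let `w` be the restriction of `v` to `K = K₀(T)`; it is non-trivial because `F/K` is algebraic
and valuation rings are integrally closed. Put `n = [F : K] + 1`. Using one of the primes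
`t` or `t - 1` of `K₀[T]` (`t ∈ T`), an Eisenstein polynomial rescaled by a suitable element
gives an irreducible `X ^ n + a X + b ∈ K[X]` with `w a = 1` and `w b < 1`. Its reduction
modulo the maximal ideal of `𝒪_v` has the simple root `0`, so if `𝒪_v` were henselian it would
have a root in `F`, of degree `n > [F : K]` over `K`.
-/

open Polynomial

section Trinomial

variable {n : ℕ}

theorem degree_C_mul_X_add_C_lt {A : Type*} [Semiring A] (hn : 2 ≤ n) (a b : A) :
    (C a * X + C b).degree < (n : WithBot ℕ) :=
  degree_linear_le.trans_lt (by exact_mod_cast (by omega : 1 < n))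

theorem monic_trinomial {A : Type*} [CommRing A] [Nontrivial A] (hn : 2 ≤ n) (a b : A) :
    (X ^ n + C a * X + C b).Monic := by
  rw [add_assoc]
  exact monic_X_pow_add (degree_C_mul_X_add_C_lt hn a b)

theorem natDegree_trinomial {A : Type*} [CommRing A] [Nontrivial A] (hn : 2 ≤ n) (a b : A) :
    (X ^ n + C a * X + C b).natDegree = n := by
  rw [add_assoc, natDegree_add_eq_left_of_degree_lt, natDegree_X_pow]
  rw [degree_X_pow]
  exact degree_C_mul_X_add_C_lt hn a b

theorem irreducible_trinomial_of_prime_dvd {R : Type*} [CommRing R] [IsDomain R] {p a b : R}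
    (hp : Prime p) (hn : 2 ≤ n) (ha : p ∣ a) (hb : p ∣ b) (hb2 : ¬ p ^ 2 ∣ b) :
    Irreducible (X ^ n + C a * X + C b) := by
  have hmonic := monic_trinomial hn a b
  have hdeg := natDegree_trinomial hn a b
  refine IsEisensteinAt.irreducible ?_ ((Ideal.span_singleton_prime hp.ne_zero).mpr hp)
    hmonic.isPrimitive (by omega)
  refine ⟨?_, fun {i} hi => ?_, ?_⟩
  · rw [hmonic.leadingCoeff, Ideal.mem_span_singleton]
    exact hp.not_dvd_one
  · rw [hdeg] at hi
    rw [Ideal.mem_span_singleton]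
    rcases i with _ | _ | i <;> simp [coeff_X, coeff_C, coeff_X_pow, hi.ne, ha, hb]
  · rw [Ideal.span_singleton_pow, Ideal.mem_span_singleton]
    have h0 : (0 : ℕ) ≠ n := by omega
    simpa [coeff_X_pow, h0] using hb2

theorem irreducible_trinomial_of_scale {K : Type*} [Field K] (hn : 1 ≤ n) {a b c : K}
    (hc : c ≠ 0) (h : Irreducible (X ^ n + C (a * c ^ (n - 1)) * X + C (b * c ^ n))) :
    Irreducible (X ^ n + C a * X + C b) := by
  let _ : Invertible c := invertibleOfNonzero hc
  have hcomp : algEquivCMulXAddC c 0 (X ^ n + C (a * c ^ (n - 1)) * X + C (b * c ^ n)) =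
      C (c ^ n) * (X ^ n + C a * X + C b) := by
    have hpow : C c ^ (n - 1) * C c = C c ^ n := pow_sub_one_mul (by omega) _
    simp only [algEquivCMulXAddC, algEquivOfCompEqX_apply, map_add, map_mul, map_pow, aeval_X,
      aeval_C, algebraMap_eq, map_zero, add_zero]
    linear_combination (C a * X) * hpow
  have hunit : IsUnit (C (c ^ n)) := isUnit_C.mpr (pow_ne_zero n hc).isUnit
  rw [← irreducible_isUnit_mul hunit, ← hcomp]
  exact (MulEquiv.irreducible_iff (algEquivCMulXAddC c 0).toMulEquiv).mpr h

theorem irreducible_trinomial_of_eisenstein {R K : Type*} [CommRing R] [IsDomain R]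
    [IsIntegrallyClosed R] [Field K] [Algebra R K] [IsFractionRing R K] {p A B : R}
    (hp : Prime p) (hn : 2 ≤ n) (hA : p ∣ A) (hB : p ∣ B) (hB2 : ¬ p ^ 2 ∣ B) {a b c : K}
    (hc : c ≠ 0) (ha : algebraMap R K A = a * c ^ (n - 1)) (hb : algebraMap R K B = b * c ^ n) :
    Irreducible (X ^ n + C a * X + C b) := by
  refine irreducible_trinomial_of_scale (by omega) hc ?_
  rw [← ha, ← hb]
  have := (monic_trinomial hn A B).irreducible_iff_irreducible_map_fraction_map (K := K) |>.mp
    (irreducible_trinomial_of_prime_dvd hp hn hA hB hB2)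
  simpa [Polynomial.map_add, Polynomial.map_mul] using this

end Trinomial

section FractionField

variable {R K Γ₀ : Type*} [CommRing R] [IsDomain R] [Field K] [Algebra R K] [IsFractionRing R K]
  [LinearOrderedCommGroupWithZero Γ₀] {n : ℕ}

theorem Valuation.exists_valuation_eq_div_of_not_dvd [WfDvdMonoid R] (w : Valuation K Γ₀) {p : R}
    (hp : Prime p) (hwp : w (algebraMap R K p) = 1) {z : K} (hz : z ≠ 0) :
    ∃ x y : R, ¬ p ∣ x ∧ ¬ p ∣ y ∧ w z = w (algebraMap R K x) / w (algebraMap R K y) := by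
  obtain ⟨x, y, hy, rfl⟩ := IsFractionRing.div_surjective (A := R) z
  have hx : x ≠ 0 := by rintro rfl; simp at hz
  obtain ⟨i, x', hx', rfl⟩ := WfDvdMonoid.max_power_factor hx hp.irreducible
  obtain ⟨j, y', hy', rfl⟩ :=
    WfDvdMonoid.max_power_factor (nonZeroDivisors.ne_zero hy) hp.irreducible
  exact ⟨x', y', hx', hy', by simp [hwp]⟩

theorem exists_irreducible_trinomial_of_valuation_eq_one [WfDvdMonoid R] [IsIntegrallyClosed R]
    (w : Valuation K Γ₀) {p : R} (hp : Prime p) (hwp : w (algebraMap R K p) = 1) {z : K}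
    (hz0 : z ≠ 0) (hz : w z < 1) (hn : 2 ≤ n) :
    ∃ a b : K, Irreducible (X ^ n + C a * X + C b) ∧ w a = 1 ∧ w b < 1 := by
  obtain ⟨x, y, hx, hy, hwz⟩ := w.exists_valuation_eq_div_of_not_dvd hp hwp hz0
  have hy0 : algebraMap R K y ≠ 0 := by
    simpa using fun h : y = 0 => hy (h ▸ dvd_zero p)
  refine ⟨algebraMap R K p, algebraMap R K p * algebraMap R K x / algebraMap R K y,
    irreducible_trinomial_of_eisenstein (A := p * y ^ (n - 1)) (B := p * (x * y ^ (n - 1)))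
      hp hn (dvd_mul_right _ _) (dvd_mul_right _ _) ?_ hy0 (by simp) ?_, hwp, ?_⟩
  · rw [pow_two, mul_dvd_mul_iff_left hp.ne_zero]
    rintro (h : p ∣ x * y ^ (n - 1))
    exact (hp.dvd_mul.mp h).elim hx (fun h => hy (hp.dvd_of_dvd_pow h))
  · rw [← pow_sub_one_mul (by omega : n ≠ 0)]
    field_simp
    simp only [map_mul, map_pow]
    ring
  · simpa [hwp, ← hwz] using hz

theorem exists_irreducible_trinomial_of_one_lt_valuation [IsIntegrallyClosed R]
    (w : Valuation K Γ₀) {p : R} (hp : Prime p) (hwp : 1 < w (algebraMap R K p)) (hn : 2 ≤ n) :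
    ∃ a b : K, Irreducible (X ^ n + C a * X + C b) ∧ w a = 1 ∧ w b < 1 := by
  have hp0 : algebraMap R K p ≠ 0 := by
    rintro h; simp [h] at hwp
  refine ⟨1, (algebraMap R K p)⁻¹ ^ (n - 1),
    irreducible_trinomial_of_eisenstein (A := p ^ (n - 1)) (B := p) hp hn
      (dvd_pow_self p (by omega)) dvd_rfl ?_ hp0 (by simp) ?_, w.map_one, ?_⟩
  · rw [pow_two]
    exact fun h => hp.not_dvd_one ((mul_dvd_mul_iff_left hp.ne_zero).mp (by simpa using h))
  · rw [← pow_sub_one_mul (by omega : n ≠ 0), ← mul_assoc, ← mul_pow, inv_mul_cancel₀ hp0,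
      one_pow, one_mul]
  · rw [map_pow, map_inv₀]
    exact pow_lt_one₀ zero_le (inv_lt_one_of_one_lt₀ hwp) (by omega)

theorem exists_irreducible_trinomial [WfDvdMonoid R] [IsIntegrallyClosed R]
    (w : Valuation K Γ₀) (hw : ∃ z : K, z ≠ 0 ∧ w z < 1) {t : R} (ht : Prime t)
    (ht1 : Prime (t - 1)) (hn : 2 ≤ n) :
    ∃ a b : K, Irreducible (X ^ n + C a * X + C b) ∧ w a = 1 ∧ w b < 1 := by
  rcases lt_trichotomy (w (algebraMap R K t)) 1 with h | h | h
  · -- `t - 1` is then a `w`-unit, and `t` itself witnesses the non-triviality of `w`.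
    have hwt1 : w (algebraMap R K (t - 1)) = 1 := by
      rw [← Valuation.map_neg, map_sub, map_one, neg_sub, w.map_one_sub_of_lt h]
    have ht0 : algebraMap R K t ≠ 0 := by simpa using ht.ne_zero
    exact exists_irreducible_trinomial_of_valuation_eq_one w ht1 hwt1 ht0 h hn
  · obtain ⟨z, hz0, hz⟩ := hw
    exact exists_irreducible_trinomial_of_valuation_eq_one w ht h hz0 hz hn
  · exact exists_irreducible_trinomial_of_one_lt_valuation w ht h hn

end FractionField

namespace Valuation

variable {K F Γ₀ : Type*} [Field K] [Field F] [Algebra K F] [LinearOrderedCommGroupWithZero Γ₀]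

theorem le_one_of_forall_algebraMap_le_one [Algebra.IsIntegral K F] (v : Valuation F Γ₀)
    (hK : ∀ z : K, v (algebraMap K F z) ≤ 1) (x : F) : v x ≤ 1 :=
  (integer.integers v).isIntegral_iff_v_le_one.mp <|
    IsIntegral.map_of_comp_eq ((algebraMap K F).codRestrict v.integer hK) (RingHom.id F) rfl
      (Algebra.IsIntegral.isIntegral x)

theorem exists_algebraMap_lt_one [Algebra.IsIntegral K F] (v : Valuation F Γ₀)
    (hv : ∃ x : F, x ≠ 0 ∧ v x ≠ 1) : ∃ z : K, z ≠ 0 ∧ v (algebraMap K F z) < 1 := by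
  by_contra! h
  have hK (z : K) : v (algebraMap K F z) ≤ 1 := by
    rcases eq_or_ne z 0 with rfl | hz
    · simp
    have hpos : 0 < v (algebraMap K F z) := v.pos_iff.mpr (by simpa using hz)
    simpa [one_le_inv₀ hpos] using h z⁻¹ (inv_ne_zero hz)
  obtain ⟨x, hx0, hx1⟩ := hv
  refine hx1 (le_antisymm (v.le_one_of_forall_algebraMap_le_one hK x) ?_)
  simpa [inv_le_one₀ (v.pos_iff.mpr hx0)] using v.le_one_of_forall_algebraMap_le_one hK x⁻¹

theorem exists_root_trinomial (v : Valuation F Γ₀) [HenselianLocalRing v.valuationSubring]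
    {n : ℕ} (hn : 2 ≤ n) {a b : F} (ha : v a = 1) (hb : v b < 1) :
    ∃ x : F, x ^ n + a * x + b = 0 := by
  have hequiv := v.isEquiv_valuation_valuationSubring
  let a' : v.valuationSubring := ⟨a, ha.le⟩
  let b' : v.valuationSubring := ⟨b, hb.le⟩
  have hb' : eval 0 (X ^ n + C a' * X + C b') ∈ IsLocalRing.maximalIdeal v.valuationSubring := by
    rw [ValuationSubring.valuation_lt_one_iff]
    simpa [b', zero_pow (by omega : n ≠ 0), ← hequiv.lt_one_iff_lt_one] using hb
  have ha' : IsUnit (eval 0 (derivative (X ^ n + C a' * X + C b'))) := by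
    rw [ValuationSubring.valuation_eq_one_iff]
    simpa [a', derivative_X_pow, zero_pow (by omega : n - 1 ≠ 0), ← hequiv.eq_one_iff_eq_one]
      using ha
  obtain ⟨x, hx, -⟩ := HenselianLocalRing.is_henselian _ (monic_trinomial hn a' b') 0 hb' ha'
  refine ⟨x, ?_⟩
  simpa [a', b'] using congrArg Subtype.val hx.eq_zero

end Valuation

theorem MvPolynomial.prime_X_sub_C {σ R : Type*} [CommRing R] [IsDomain R] (i : σ) (r : R) :
    Prime (X i - C r : MvPolynomial σ R) := by
  classical
  let e : MvPolynomial σ R ≃ₐ[R] MvPolynomial σ R := AlgEquiv.ofAlgHom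
    (aeval (Function.update X i (X i - C r))) (aeval (Function.update X i (X i + C r)))
    (by ext j; by_cases hj : j = i <;> simp [hj])
    (by ext j; by_cases hj : j = i <;> simp [hj])
  have he : e (X i) = X i - C r := by simp [e]
  exact he ▸ (MulEquiv.prime_iff e).mpr X_prime

/-- Let `K = K₀(T)` be a rational function field in a nonempty set `T` of variables
over a field `K₀` (formalized as the fraction field of the multivariate polynomial
ring), and let `F` be a finite extension of `K`.  Then no non-trivial valuation on
`F` is henselian (henselianity of `(F,v)` being equivalent to henselianity of the
local ring `O_v`). -/
theorem no_nontrivial_henselian_valuation_on_function_field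
    (K₀ : Type*) [Field K₀] (T : Type*) [Nonempty T]
    (F : Type*) [Field F] [Algebra (FractionRing (MvPolynomial T K₀)) F]
    [FiniteDimensional (FractionRing (MvPolynomial T K₀)) F]
    {Γ₀ : Type*} [LinearOrderedCommGroupWithZero Γ₀] (v : Valuation F Γ₀)
    (hnontriv : ∃ x : F, x ≠ 0 ∧ v x ≠ 1) :
    ¬ HenselianLocalRing ↥v.valuationSubring := by
  intro _
  let K := FractionRing (MvPolynomial T K₀)
  let n := Module.finrank K F + 1
  have hn : 2 ≤ n := Nat.succ_le_succ Module.finrank_pos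
  obtain ⟨t⟩ := ‹Nonempty T›
  obtain ⟨a, b, hirr, ha, hb⟩ := exists_irreducible_trinomial (v.comap (algebraMap K F))
    (v.exists_algebraMap_lt_one hnontriv) (MvPolynomial.X_prime (i := t))
    (by simpa using MvPolynomial.prime_X_sub_C (R := K₀) t 1) hn
  obtain ⟨x, hx⟩ := v.exists_root_trinomial hn ha hb
  have hmin : X ^ n + C a * X + C b = minpoly K x :=
    minpoly.eq_of_irreducible_of_monic hirr (by simpa using hx) (monic_trinomial hn a b)
  have hdeg : n ≤ Module.finrank K F := by
    simpa [← hmin, natDegree_trinomial hn] using minpoly.natDegree_le (A := K) x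
  omega
end

section
/- Any two integer parts of an ordered field are isomorphic as ordered sets; in particular they have the same cardinality. -/
/-- `I` is an integer part of the ordered field `K`: a discretely ordered subring
(`1` is the least positive element) such that every `a ∈ K` satisfies
`r ≤ a < r + 1` for some `r ∈ I`. -/
def Subring.IsIntegerPart {K : Type*} [Field K] [LinearOrder K] [IsStrictOrderedRing K] (I : Subring K) : Prop :=
  (∀ r ∈ I, 0 < r → 1 ≤ r) ∧ (∀ a : K, ∃ r ∈ I, r ≤ a ∧ a < r + 1)

/-!
Partition `K` into the cosets of the convex subgroup of finite elements (those bounded by an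
integer), i.e. `closedBallAddSubgroup 0` in the language of Archimedean classes. A discretely
ordered subring meets the finite elements exactly in `ℤ`, so an integer part `I` meets each coset
in a translate of `ℤ`. Choosing a representative `c` of each coset and translating the whole coset
by the finite amount `⌊c⌋_J - ⌊c⌋_I` moves `I` onto `J`, and since a finite translation cannot
change the relative order of two distinct cosets, this is an order automorphism of `K`.
-/

open ArchimedeanClass

def OrderIso.subtypeEquiv {α β : Type*} [LE α] [LE β] (e : α ≃o β) {p : α → Prop}
    {q : β → Prop} (h : ∀ a, p a ↔ q (e a)) : {a // p a} ≃o {b // q b} :=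
  { e.toEquiv.subtypeEquiv h with map_rel_iff' := e.le_iff_le }

namespace ArchimedeanClass

variable {M : Type*} [AddCommGroup M] [LinearOrder M] [IsOrderedAddMonoid M]
  {c : ArchimedeanClass M}

theorem strictMono_add_comp_mk (d : M ⧸ closedBallAddSubgroup c → closedBallAddSubgroup c) :
    StrictMono fun x : M => x + d x := by
  intro x y hxy
  by_cases hxy' : (x : M ⧸ closedBallAddSubgroup c) = y
  · simpa [hxy'] using hxy
  · have hlt : mk (y - x) < c := by
      rw [QuotientAddGroup.eq, neg_add_eq_sub, mem_closedBallAddSubgroup_iff] at hxy'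
      exact not_le.mp hxy'
    have hle : c ≤ mk (y + d y - (x + d x) - (y - x)) := by
      rw [← mem_closedBallAddSubgroup_iff]
      convert sub_mem (d y).2 (d x).2 using 1
      abel
    exact sub_pos.mp (pos_of_pos_of_mk_lt (sub_pos.mpr hxy) (hlt.trans_le hle))

noncomputable def shiftCosets (d : M ⧸ closedBallAddSubgroup c → closedBallAddSubgroup c) :
    M ≃o M where
  toFun x := x + d x
  invFun x := x - d x
  left_inv x := by simp [QuotientAddGroup.mk_add_of_mem x (d x).2]
  right_inv x := by
    simp [sub_eq_add_neg, QuotientAddGroup.mk_add_of_mem x (neg_mem (d x).2)]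
  map_rel_iff' := (strictMono_add_comp_mk d).le_iff_le

theorem shiftCosets_symm_apply (d : M ⧸ closedBallAddSubgroup c → closedBallAddSubgroup c)
    (x : M) : (shiftCosets d).symm x = x - d x := rfl

end ArchimedeanClass

namespace Subring

variable {R : Type*} [CommRing R] [LinearOrder R] [IsStrictOrderedRing R] {I : Subring R}

theorem eq_of_le_of_lt_add_one (hI : ∀ r ∈ I, 0 < r → 1 ≤ r) {r s : R} (hr : r ∈ I)
    (hs : s ∈ I) (h₁ : r ≤ s) (h₂ : s < r + 1) : s = r := by
  by_contra hne
  have hle := hI (s - r) (sub_mem hs hr) (sub_pos.mpr (h₁.lt_of_ne' hne))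
  linarith

theorem exists_intCast_eq_of_mk_nonneg (hI : ∀ r ∈ I, 0 < r → 1 ≤ r) {x : R} (hx : x ∈ I)
    (hfin : 0 ≤ ArchimedeanClass.mk x) : ∃ m : ℤ, (m : R) = x := by
  obtain ⟨m, hm, hmax⟩ := Int.exists_greatest_of_bdd (P := fun k : ℤ => (k : R) ≤ x)
    (by
      obtain ⟨n, hn⟩ := exists_int_gt_of_mk_nonneg hfin
      exact ⟨n, fun k hk => by exact_mod_cast (hk.trans_lt hn).le⟩)
    (exists_int_le_of_mk_nonneg hfin)
  refine ⟨m, (eq_of_le_of_lt_add_one hI (intCast_mem I m) hx hm ?_).symm⟩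
  by_contra! h
  have hle := hmax (m + 1) (by push_cast; exact h)
  omega

end Subring

namespace Subring.IsIntegerPart

variable {K : Type*} [Field K] [LinearOrder K] [IsStrictOrderedRing K] {I J : Subring K}

local notation "𝓕" => closedBallAddSubgroup (0 : ArchimedeanClass K)

noncomputable def floor (hI : I.IsIntegerPart) (a : K) : K := (hI.2 a).choose

theorem floor_mem (hI : I.IsIntegerPart) (a : K) : hI.floor a ∈ I := (hI.2 a).choose_spec.1

theorem floor_le (hI : I.IsIntegerPart) (a : K) : hI.floor a ≤ a := (hI.2 a).choose_spec.2.1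

theorem lt_floor_add_one (hI : I.IsIntegerPart) (a : K) : a < hI.floor a + 1 :=
  (hI.2 a).choose_spec.2.2

theorem floor_sub_mem (hI : I.IsIntegerPart) (a : K) : hI.floor a - a ∈ 𝓕 := by
  rw [mem_closedBallAddSubgroup_iff, ← ArchimedeanClass.mk_one]
  refine mk_le_mk_of_abs ?_
  have hle := hI.floor_le a
  have hlt := hI.lt_floor_add_one a
  rw [abs_one, abs_le]
  constructor <;> linarith

noncomputable def floorDiff (hI : I.IsIntegerPart) (hJ : J.IsIntegerPart) (C : K ⧸ 𝓕) : 𝓕 :=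
  ⟨hJ.floor C.out - hI.floor C.out, by
    simpa using sub_mem (hJ.floor_sub_mem C.out) (hI.floor_sub_mem C.out)⟩

theorem floorDiff_swap (hI : I.IsIntegerPart) (hJ : J.IsIntegerPart) (C : K ⧸ 𝓕) :
    (floorDiff hJ hI C : K) = -floorDiff hI hJ C := by
  simp [floorDiff]

theorem add_floorDiff_mem (hI : I.IsIntegerPart) (hJ : J.IsIntegerPart) {r : K} (hr : r ∈ I) :
    r + floorDiff hI hJ r ∈ J := by
  set c := (r : K ⧸ 𝓕).out
  have hrc : r - c ∈ 𝓕 := by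
    rw [← neg_add_eq_sub]
    exact QuotientAddGroup.eq.mp (Quotient.out_eq _)
  obtain ⟨m, hm⟩ : ∃ m : ℤ, (m : K) = r - hI.floor c := by
    refine exists_intCast_eq_of_mk_nonneg hI.1 (sub_mem hr (hI.floor_mem c)) ?_
    rw [← mem_closedBallAddSubgroup_iff]
    simpa using sub_mem hrc (hI.floor_sub_mem c)
  have hshift : r + floorDiff hI hJ r = hJ.floor c + m := by
    rw [hm, floorDiff]
    ring
  exact hshift ▸ add_mem (hJ.floor_mem c) (intCast_mem J m)

theorem exists_orderIso_mem_iff (hI : I.IsIntegerPart) (hJ : J.IsIntegerPart) :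
    ∃ e : K ≃o K, ∀ x, x ∈ I ↔ e x ∈ J := by
  refine ⟨shiftCosets (floorDiff hI hJ), fun x => ⟨add_floorDiff_mem hI hJ, fun hx => ?_⟩⟩
  have hmem := add_floorDiff_mem hJ hI hx
  rwa [floorDiff_swap, ← sub_eq_add_neg, ← shiftCosets_symm_apply,
    OrderIso.symm_apply_apply] at hmem

end Subring.IsIntegerPart

/-- Any two integer parts of an ordered field are isomorphic as ordered sets,
in particular they have the same cardinality. -/
theorem integer_parts_orderIso {K : Type*} [Field K] [LinearOrder K] [IsStrictOrderedRing K]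
    (I₁ I₂ : Subring K) (h₁ : I₁.IsIntegerPart) (h₂ : I₂.IsIntegerPart) :
    Nonempty (I₁ ≃o I₂) ∧ Cardinal.mk I₁ = Cardinal.mk I₂ := by
  obtain ⟨e, he⟩ := h₁.exists_orderIso_mem_iff h₂
  let f : I₁ ≃o I₂ := e.subtypeEquiv he
  exact ⟨⟨f⟩, Cardinal.mk_congr f.toEquiv⟩
end

section
/- Let (L,<) be an ordered field and K a dense subfield (with respect to the order topology). Then every integer part of (K,<) is an integer part of (L,<). -/
/-- `I` is an integer part of the ordered field `F` restricted to the elements of a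
set `S` (for `S = Set.univ` this is the usual notion): a discretely ordered subring
such that every `a ∈ S` satisfies `r ≤ a < r + 1` for some `r ∈ I`. -/
def IsIntegerPartOn {F : Type*} [Field F] [LinearOrder F] [IsStrictOrderedRing F] (I : Subring F) (S : Set F) : Prop :=
  (∀ r ∈ I, 0 < r → 1 ≤ r) ∧ (∀ a ∈ S, ∃ r ∈ I, r ≤ a ∧ a < r + 1)

/-- The integer part `r` of a point `c ∈ (a, a + 1)` is either an integer part of `a`
or exceeds it, in which case `r - 1` is one. -/
theorem Subring.exists_le_lt_add_one_of_near {R : Type*} [CommRing R] [LinearOrder R]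
    [IsStrictOrderedRing R] {I : Subring R} {a c r : R} (hr : r ∈ I)
    (hac : a < c) (hca : c < a + 1) (hrc : r ≤ c) (hcr : c < r + 1) :
    ∃ s ∈ I, s ≤ a ∧ a < s + 1 := by
  rcases le_or_gt r a with hra | har
  · exact ⟨r, hr, hra, by linarith⟩
  · exact ⟨r - 1, sub_mem hr I.one_mem, by linarith, by linarith⟩

theorem IsIntegerPartOn.univ_of_dense {F : Type*} [Field F] [LinearOrder F]
    [IsStrictOrderedRing F] {I : Subring F} {S : Set F}
    (hS : ∀ a b : F, a < b → ∃ c ∈ S, a < c ∧ c < b) (hI : IsIntegerPartOn I S) :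
    IsIntegerPartOn I Set.univ := by
  refine ⟨hI.1, fun a _ => ?_⟩
  obtain ⟨c, hcS, hac, hca⟩ := hS a (a + 1) (lt_add_one a)
  obtain ⟨r, hr, hrc, hcr⟩ := hI.2 c hcS
  exact Subring.exists_le_lt_add_one_of_near hr hac hca hrc hcr

theorem integer_part_of_dense_subfield_general {L : Type*} [Field L] [LinearOrder L] [IsStrictOrderedRing L]
    (K : Subfield L) (hd : ∀ a b : L, a < b → ∃ c ∈ K, a < c ∧ c < b)
    (I : Subring L)
    (hI : IsIntegerPartOn I (K : Set L)) :
    IsIntegerPartOn I (Set.univ : Set L) :=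
  hI.univ_of_dense hd

/-- If `K` is a dense subfield of an ordered field `(L,<)` (order-topology density)
then every integer part of `(K,<)` is an integer part of `(L,<)`. -/
theorem integer_part_of_dense_subfield {L : Type*} [Field L] [LinearOrder L] [IsStrictOrderedRing L]
    (K : Subfield L) (hd : ∀ a b : L, a < b → ∃ c ∈ K, a < c ∧ c < b)
    (I : Subring L) (hIK : (I : Set L) ⊆ K)
    (hI : IsIntegerPartOn I (K : Set L)) :
    IsIntegerPartOn I (Set.univ : Set L) :=
  integer_part_of_dense_subfield_general K hd I hI
end
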